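/- The function Ψ(p) = √(1 + p⁻² · ln((2p−1)/(2(p−1)))) − 1 is strictly decreasing on the interval (1, ∞). -/

import Mathlib

noncomputable def Psi (p : ℝ) : ℝ :=
  Real.sqrt (1 + (p ^ 2)⁻¹ * Real.log ((2 * p - 1) / (2 * (p - 1)))) - 1

/-! Both factors of `p⁻² · ln((2p-1)/(2(p-1)))` are positive and strictly decreasing on `(1, ∞)`,
so their product is strictly decreasing, and `x ↦ √(1 + x) - 1` is strictly increasing. -/

open Set Real

theorem StrictAntiOn.mul_of_nonneg {α M₀ : Type*} [Preorder α] [MulZeroClass M₀] [PartialOrder M₀]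
    [PosMulStrictMono M₀] [MulPosStrictMono M₀] {f g : α → M₀} {s : Set α}
    (hf : StrictAntiOn f s) (hg : StrictAntiOn g s)
    (hf₀ : ∀ x ∈ s, 0 ≤ f x) (hg₀ : ∀ x ∈ s, 0 ≤ g x) : StrictAntiOn (f * g) s :=
  fun _ ha _ hb h ↦ mul_lt_mul'' (hf ha hb h) (hg ha hb h) (hf₀ _ hb) (hg₀ _ hb)

theorem strictAntiOn_inv_sq : StrictAntiOn (fun p : ℝ ↦ (p ^ 2)⁻¹) (Ioi 0) :=
  fun _ ha _ _ h ↦ (inv_lt_inv₀ (pow_pos (mem_Ioi.1 ha |>.trans h) 2) (pow_pos ha 2)).2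
    (pow_lt_pow_left₀ h (le_of_lt ha) two_ne_zero)

theorem one_lt_two_mul_sub_one_div {p : ℝ} (hp : 1 < p) : 1 < (2 * p - 1) / (2 * (p - 1)) := by
  rw [lt_div_iff₀ (by linarith)]
  linarith

theorem strictAntiOn_two_mul_sub_one_div :
    StrictAntiOn (fun p : ℝ ↦ (2 * p - 1) / (2 * (p - 1))) (Ioi 1) := by
  intro a (ha : 1 < a) b (hb : 1 < b) hab
  rw [div_lt_div_iff₀ (by linarith) (by linarith)]
  nlinarith

theorem strictAntiOn_log_two_mul_sub_one_div :
    StrictAntiOn (fun p : ℝ ↦ log ((2 * p - 1) / (2 * (p - 1)))) (Ioi 1) :=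
  strictMonoOn_log.comp_strictAntiOn strictAntiOn_two_mul_sub_one_div
    fun _ hp ↦ zero_lt_one.trans (one_lt_two_mul_sub_one_div hp)

theorem strictAntiOn_inv_sq_mul_log :
    StrictAntiOn (fun p : ℝ ↦ (p ^ 2)⁻¹ * log ((2 * p - 1) / (2 * (p - 1)))) (Ioi 1) :=
  StrictAntiOn.mul_of_nonneg (f := fun p : ℝ ↦ (p ^ 2)⁻¹)
    (strictAntiOn_inv_sq.mono (Ioi_subset_Ioi zero_le_one)) strictAntiOn_log_two_mul_sub_one_div
    (fun _ _ ↦ by positivity)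
    fun _ hp ↦ (log_pos (one_lt_two_mul_sub_one_div hp)).le

theorem psi_strictAntiOn : StrictAntiOn Psi (Set.Ioi 1) := by
  intro a ha b hb hab
  have hdecr : (b ^ 2)⁻¹ * log ((2 * b - 1) / (2 * (b - 1))) <
      (a ^ 2)⁻¹ * log ((2 * a - 1) / (2 * (a - 1))) :=
    strictAntiOn_inv_sq_mul_log ha hb hab
  have hb₀ : 0 ≤ (b ^ 2)⁻¹ * log ((2 * b - 1) / (2 * (b - 1))) :=
    mul_nonneg (by positivity) (log_pos (one_lt_two_mul_sub_one_div hb)).le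
  have hsqrt := sqrt_lt_sqrt (by linarith) (add_lt_add_right hdecr 1)
  unfold Psi
  linarith
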